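/- Let S ⊆ ℝ^8 be the union of J̃'(7,2) = {e_i + e_j : 1 ≤ i < j ≤ 7}, the single vector ((1/2)^7, −3/2) (first seven coordinates 1/2, last coordinate −3/2), and the 7 vectors having six of the first seven coordinates equal to 1/2, one of the first seven coordinates equal to −1/2, and last coordinate −1/2. Then S has exactly 29 points, S is a two-distance set in the hyperplane H = {x ∈ ℝ^8 : x_1 + ⋯ + x_8 = 2} with distances √2 and 2, and S is maximal: no point y ∈ H \ S can be added to S while keeping it a two-distance set. -/

import Mathlib

noncomputable section

/-- The set of distances between distinct points of `S`. -/
def distSet {n : ℕ} (S : Set (EuclideanSpace ℝ (Fin n))) : Set ℝ :=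
  {d | ∃ x ∈ S, ∃ y ∈ S, x ≠ y ∧ d = dist x y}

/-- `S` is an `s`-distance set: exactly `s` distances occur between distinct points. -/
def IsSDistanceSet {n : ℕ} (s : ℕ) (S : Set (EuclideanSpace ℝ (Fin n))) : Prop :=
  (distSet S).Finite ∧ (distSet S).ncard = s

/-- The representation `J̃'(n-1,2) = {eᵢ + eⱼ : 1 ≤ i < j ≤ n-1}` of the Johnson graph
`J(n-1,2)` inside `ℝⁿ` (0-based: indices `< n-1`, i.e. all but the last coordinate). -/
def JohnsonRep' (n : ℕ) : Set (EuclideanSpace ℝ (Fin n)) :=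
  {x | ∃ i j : Fin n, (i : ℕ) < (j : ℕ) ∧ (j : ℕ) < n - 1 ∧
    x = EuclideanSpace.single i 1 + EuclideanSpace.single j 1}

/-- The hyperplane `H = {x ∈ ℝⁿ : ∑ xᵢ = 2}`. -/
def Hyp2 (n : ℕ) : Set (EuclideanSpace ℝ (Fin n)) :=
  {x | ∑ i, x i = (2 : ℝ)}

/-- The single vector `((1/2)^7, -3/2) ∈ ℝ⁸`. -/
def V0eight : Set (EuclideanSpace ℝ (Fin 8)) :=
  {x | (∀ i : Fin 8, (i : ℕ) < 7 → x i = 1/2) ∧ (∀ i : Fin 8, (i : ℕ) = 7 → x i = -3/2)}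

/-- The 7 vectors `((1/2)^6, -1/2, -1/2)^{P'} ∈ ℝ⁸`: six of the first seven coordinates
equal `1/2`, one of the first seven equals `-1/2`, and the last equals `-1/2`. -/
def Weight : Set (EuclideanSpace ℝ (Fin 8)) :=
  {x | {i : Fin 8 | (i : ℕ) < 7 ∧ x i = 1/2}.ncard = 6 ∧
    {i : Fin 8 | (i : ℕ) < 7 ∧ x i = -1/2}.ncard = 1 ∧
    (∀ i : Fin 8, (i : ℕ) = 7 → x i = -1/2)}

/-!
The 29 points have integral doubled coordinates, so their number, their coordinate sums and their
mutual distances are finite computations. For maximality, let `y ∈ H` be at distance `√2` or `2`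
from all of them and put `T = ‖y‖²`. The points `eᵢ + eⱼ` force every sum `yᵢ + yⱼ` (`i ≠ j < 7`)
into `{T/2, T/2 - 1}`, and pairwise sums with only two values leave at most one of `y₀, …, y₆`
different from the others. Hence the first seven coordinates are six `a`'s and one `b`; the
distances to `V0eight` and to the point of `Weight` carrying its `-1/2` where `y` carries `b`,
together with `6a + b + y₇ = 2` and `T = 6a² + b² + y₇²`, then have no real solution.
-/

open Finset

section

variable {ι : Type*} {f : ι → ℝ} {c d : ℝ}

lemma eq_or_eq_or_eq_of_add_mem (h : ∀ i j, i ≠ j → f i + f j = c ∨ f i + f j = d)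
    {i j l : ι} (hij : i ≠ j) (hil : i ≠ l) (hjl : j ≠ l) :
    f i = f j ∨ f i = f l ∨ f j = f l := by
  rcases h i j hij with h₁ | h₁ <;> rcases h i l hil with h₂ | h₂ <;>
    rcases h j l hjl with h₃ | h₃ <;>
    first | (left; linarith) | (right; left; linarith) | (right; right; linarith)

-- Two distinct values, each taken twice, would give three distinct pairwise sums.
lemma eq_of_add_mem_of_eq_of_eq (h : ∀ i j, i ≠ j → f i + f j = c ∨ f i + f j = d)
    {i j l m : ι} (hij : i ≠ j) (hlm : l ≠ m) (hil : i ≠ l) (hj : f j = f i) (hm : f m = f l) :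
    f i = f l := by
  rcases h i j hij with h₁ | h₁ <;> rcases h l m hlm with h₂ | h₂ <;>
    rcases h i l hil with h₃ | h₃ <;> linarith

theorem exists_forall_ne_eq_of_add_mem [Nonempty ι]
    (h : ∀ i j, i ≠ j → f i + f j = c ∨ f i + f j = d) : ∃ k a, ∀ i, i ≠ k → f i = a := by
  by_contra! H
  obtain ⟨i₀⟩ := ‹Nonempty ι›
  obtain ⟨i₁, hi₁, hne⟩ := H i₀ (f i₀)
  have two_values : ∀ x, f x = f i₀ ∨ f x = f i₁ := by
    intro x
    by_cases hx₀ : x = i₀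
    · exact .inl (congrArg f hx₀)
    by_cases hx₁ : x = i₁
    · exact .inr (congrArg f hx₁)
    rcases eq_or_eq_or_eq_of_add_mem h hx₀ hx₁ hi₁.symm with h' | h' | h'
    exacts [.inl h', .inr h', absurd h'.symm hne]
  obtain ⟨j, hj, hj₁⟩ := H i₀ (f i₁)
  obtain ⟨l, hl, hl₀⟩ := H i₁ (f i₀)
  exact hne (eq_of_add_mem_of_eq_of_eq h hj.symm hl.symm hi₁.symm
    ((two_values j).resolve_right hj₁) ((two_values l).resolve_left hl₀)).symm

lemma sum_eq_add_mul_of_forall_ne_eq [Fintype ι] [DecidableEq ι] {k : ι} {a : ℝ}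
    (h : ∀ i, i ≠ k → f i = a) : ∑ i, f i = f k + (Fintype.card ι - 1) * a := by
  have : Nonempty ι := ⟨k⟩
  rw [← add_sum_erase _ _ (mem_univ k), sum_congr rfl fun i hi => h i (ne_of_mem_erase hi),
    sum_const, card_erase_of_mem (mem_univ k), card_univ, nsmul_eq_mul,
    Nat.cast_pred Fintype.card_pos]

end

lemma eq_sqrt_two_or_eq_two_iff {r : ℝ} (hr : 0 ≤ r) : r = √2 ∨ r = 2 ↔ r ^ 2 = 2 ∨ r ^ 2 = 4 := by
  constructor
  · rintro (rfl | rfl) <;> norm_num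
  · rintro (h | h)
    · exact .inl (by rw [← h, Real.sqrt_sq hr])
    · exact .inr ((sq_eq_sq₀ hr zero_le_two).1 (by rw [h]; norm_num))

lemma distSet_mono {n : ℕ} {S S' : Set (EuclideanSpace ℝ (Fin n))} (h : S ⊆ S') :
    distSet S ⊆ distSet S' := by
  rintro _ ⟨x, hx, y, hy, hxy, rfl⟩
  exact ⟨x, h hx, y, h hy, hxy, rfl⟩

lemma IsSDistanceSet.distSet_eq_of_subset {s n : ℕ} {S S' : Set (EuclideanSpace ℝ (Fin n))}
    (hS : IsSDistanceSet s S) (hS' : IsSDistanceSet s S') (h : S ⊆ S') :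
    distSet S' = distSet S :=
  (Set.eq_of_subset_of_ncard_le (distSet_mono h) (by rw [hS.2, hS'.2]) hS'.1).symm

abbrev PointIndex := {p : Fin 7 × Fin 7 // p.1 < p.2} ⊕ (Unit ⊕ Fin 7)

def doubledCoord : PointIndex → Fin 8 → ℤ
  | .inl p => fun m => (if m = p.1.1.castSucc then 2 else 0) + (if m = p.1.2.castSucc then 2 else 0)
  | .inr (.inl _) => fun m => if m = Fin.last 7 then -3 else 1
  | .inr (.inr k) => fun m => if m = Fin.last 7 ∨ m = k.castSucc then -1 else 1

def point (a : PointIndex) : EuclideanSpace ℝ (Fin 8) :=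
  WithLp.toLp 2 fun m => (doubledCoord a m : ℝ) / 2

lemma point_apply (a : PointIndex) (m : Fin 8) : point a m = (doubledCoord a m : ℝ) / 2 := rfl

lemma point_injective : Function.Injective point := by
  have hd : Function.Injective doubledCoord := by decide
  intro a b h
  refine hd (funext fun m => ?_)
  have := congrArg (· m) h
  simp only [point_apply] at this
  exact_mod_cast (div_left_inj' two_ne_zero).1 this

lemma point_inl (p : {p : Fin 7 × Fin 7 // p.1 < p.2}) :
    point (.inl p) =
      EuclideanSpace.single p.1.1.castSucc 1 + EuclideanSpace.single p.1.2.castSucc 1 := by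
  ext m
  simp only [point_apply, doubledCoord, PiLp.add_apply, PiLp.single_apply]
  split_ifs <;> norm_num

lemma point_inr_inl_apply (m : Fin 8) :
    point (.inr (.inl ())) m = if m = Fin.last 7 then -3 / 2 else 1 / 2 := by
  simp only [point_apply, doubledCoord]
  split_ifs <;> norm_num

lemma point_inr_inr_apply (k : Fin 7) (m : Fin 8) :
    point (.inr (.inr k)) m = if m = Fin.last 7 ∨ m = k.castSucc then -1 / 2 else 1 / 2 := by
  simp only [point_apply, doubledCoord]
  split_ifs <;> norm_num

lemma johnsonRep'_eight : JohnsonRep' 8 = Set.range (point ∘ Sum.inl) := by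
  ext x
  constructor
  · rintro ⟨i, j, hij, hj, rfl⟩
    refine ⟨⟨(i.castLT (hij.trans hj), j.castLT hj), hij⟩, ?_⟩
    simp [point_inl]
  · rintro ⟨p, rfl⟩
    exact ⟨_, _, p.2, p.1.2.isLt, point_inl p⟩

lemma v0eight_eq : V0eight = {point (.inr (.inl ()))} := by
  ext x
  simp only [V0eight, Set.mem_ofPred_eq, Set.mem_singleton_iff]
  constructor
  · rintro ⟨hlt, hlast⟩
    ext m
    rw [point_inr_inl_apply]
    split_ifs with hm
    · exact hlast m (by simp [hm])
    · exact hlt m (Fin.val_lt_last hm)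
  · rintro rfl
    refine ⟨fun i hi => ?_, fun i hi => ?_⟩
    · rw [point_inr_inl_apply, if_neg (fun h => by simp [h] at hi)]
    · rw [point_inr_inl_apply, if_pos (Fin.ext hi)]

lemma point_inr_inr_mem_weight (k : Fin 7) : point (.inr (.inr k)) ∈ Weight := by
  have key : ∀ (i : Fin 8) (z : ℤ),
      point (.inr (.inr k)) i = z / 2 ↔ doubledCoord (.inr (.inr k)) i = z := fun i z => by
    rw [point_apply, div_left_inj' two_ne_zero, Int.cast_inj]
  refine ⟨?_, ?_, fun i hi => ?_⟩
  · simp_rw [show (1 / 2 : ℝ) = ((1 : ℤ) : ℝ) / 2 by norm_num, key,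
      Set.ncard_eq_toFinset_card', Set.toFinset_ofPred]
    clear key; revert k; decide
  · simp_rw [show (-1 / 2 : ℝ) = ((-1 : ℤ) : ℝ) / 2 by norm_num, key,
      Set.ncard_eq_toFinset_card', Set.toFinset_ofPred]
    clear key; revert k; decide
  · rw [point_inr_inr_apply, if_pos (.inl (Fin.ext hi))]

lemma exists_point_eq_of_mem_weight {x : EuclideanSpace ℝ (Fin 8)} (hx : x ∈ Weight) :
    ∃ k, point (.inr (.inr k)) = x := by
  obtain ⟨hA, hB, hlast⟩ := hx
  set A := {i : Fin 8 | (i : ℕ) < 7 ∧ x i = 1/2}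
  set B := {i : Fin 8 | (i : ℕ) < 7 ∧ x i = -1/2}
  obtain ⟨k₀, hk₀⟩ := Set.ncard_eq_one.1 hB
  have hk₀B : k₀ ∈ B := hk₀ ▸ rfl
  have hdisj : Disjoint A B := Set.disjoint_left.2 fun i hiA hiB => by linarith [hiA.2, hiB.2]
  have hcover : A ∪ B = {i : Fin 8 | (i : ℕ) < 7} := by
    refine Set.eq_of_subset_of_ncard_le (Set.union_subset (fun i hi => hi.1) fun i hi => hi.1) ?_
    rw [Set.ncard_union_eq hdisj, hA, hB, Set.ncard_eq_toFinset_card', Set.toFinset_ofPred]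
    decide
  refine ⟨k₀.castLT hk₀B.1, ?_⟩
  ext m
  rw [point_inr_inr_apply, Fin.castSucc_castLT]
  by_cases hm : (m : ℕ) < 7
  · rcases (hcover ▸ hm : m ∈ A ∪ B) with hmA | hmB
    · rw [if_neg, hmA.2]
      rintro (h | rfl)
      · simp [h] at hm
      · linarith [hmA.2, hk₀B.2]
    · obtain rfl : m = k₀ := Set.mem_singleton_iff.1 (hk₀ ▸ hmB)
      rw [if_pos (.inr rfl), hk₀B.2]
  · rw [if_pos (.inl (Fin.ext (by simp; omega))), hlast m (by omega)]

lemma weight_eq : Weight = Set.range (point ∘ Sum.inr ∘ Sum.inr) :=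
  Set.ext fun _ => ⟨exists_point_eq_of_mem_weight, by
    rintro ⟨k, rfl⟩
    exact point_inr_inr_mem_weight k⟩

lemma range_point : Set.range point = JohnsonRep' 8 ∪ V0eight ∪ Weight := by
  rw [johnsonRep'_eight, v0eight_eq, weight_eq]
  ext x
  constructor
  · rintro ⟨p | _ | k, rfl⟩
    exacts [.inl (.inl ⟨p, rfl⟩), .inl (.inr rfl), .inr ⟨k, rfl⟩]
  · rintro ((⟨p, rfl⟩ | rfl) | ⟨k, rfl⟩) <;> exact ⟨_, rfl⟩

lemma ncard_range_point : (Set.range point).ncard = 29 := by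
  rw [Set.ncard_range_of_injective point_injective, Nat.card_eq_fintype_card]
  rfl

lemma range_point_subset_hyp2 : Set.range point ⊆ Hyp2 8 := by
  rintro _ ⟨a, rfl⟩
  have h : ∀ a : PointIndex, ∑ m, doubledCoord a m = 4 := by decide
  show ∑ m, point a m = 2
  calc ∑ m, point a m = ((∑ m, doubledCoord a m : ℤ) : ℝ) / 2 := by
        push_cast [sum_div]; rfl
    _ = 2 := by rw [h]; norm_num

lemma sq_dist_point_point (a b : PointIndex) :
    dist (point a) (point b) ^ 2 =
      ((∑ m, (doubledCoord a m - doubledCoord b m) ^ 2 : ℤ) : ℝ) / 4 := by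
  rw [EuclideanSpace.dist_eq, Real.sq_sqrt (by positivity)]
  push_cast
  rw [sum_div]
  refine sum_congr rfl fun m _ => ?_
  rw [Real.dist_eq, sq_abs, point_apply, point_apply]
  ring

lemma dist_point_point_of_ne {a b : PointIndex} (h : a ≠ b) :
    dist (point a) (point b) = √2 ∨ dist (point a) (point b) = 2 := by
  have hsq : ∀ a b : PointIndex, a ≠ b → ∑ m, (doubledCoord a m - doubledCoord b m) ^ 2 = 8 ∨
      ∑ m, (doubledCoord a m - doubledCoord b m) ^ 2 = 16 := by decide
  rw [eq_sqrt_two_or_eq_two_iff dist_nonneg, sq_dist_point_point]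
  rcases hsq a b h with h' | h' <;> rw [h'] <;> norm_num

lemma distSet_range_point : distSet (Set.range point) = {√2, 2} := by
  refine Set.Subset.antisymm ?_ ?_
  · rintro _ ⟨_, ⟨a, rfl⟩, _, ⟨b, rfl⟩, hab, rfl⟩
    exact dist_point_point_of_ne (ne_of_apply_ne point hab)
  · let e₀₁ : PointIndex := .inl ⟨(0, 1), by decide⟩
    let e₀₂ : PointIndex := .inl ⟨(0, 2), by decide⟩
    let e₂₃ : PointIndex := .inl ⟨(2, 3), by decide⟩
    rintro _ (rfl | rfl)
    · refine ⟨_, ⟨e₀₁, rfl⟩, _, ⟨e₀₂, rfl⟩, point_injective.ne (by decide), ?_⟩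
      refine (sq_eq_sq₀ (Real.sqrt_nonneg 2) dist_nonneg).1 ?_
      rw [Real.sq_sqrt zero_le_two, sq_dist_point_point]
      simp [e₀₁, e₀₂, doubledCoord, Fin.sum_univ_succ]
      norm_num
    · refine ⟨_, ⟨e₀₁, rfl⟩, _, ⟨e₂₃, rfl⟩, point_injective.ne (by decide), ?_⟩
      refine (sq_eq_sq₀ zero_le_two dist_nonneg).1 ?_
      rw [sq_dist_point_point]
      simp [e₀₁, e₂₃, doubledCoord, Fin.sum_univ_succ]
      norm_num

lemma isSDistanceSet_range_point : IsSDistanceSet 2 (Set.range point) := by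
  rw [IsSDistanceSet, distSet_range_point]
  exact ⟨Set.toFinite _, Set.ncard_pair ((Real.sqrt_lt' two_pos).2 (by norm_num)).ne⟩

section

variable (y : EuclideanSpace ℝ (Fin 8))

lemma sq_dist_point (a : PointIndex) :
    dist y (point a) ^ 2 =
      ‖y‖ ^ 2 - ∑ m, y m * doubledCoord a m + ((∑ m, doubledCoord a m ^ 2 : ℤ) : ℝ) / 4 := by
  rw [EuclideanSpace.dist_eq, Real.sq_sqrt (by positivity), EuclideanSpace.norm_sq_eq]
  push_cast
  rw [sum_div, ← sum_sub_distrib, ← sum_add_distrib]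
  refine sum_congr rfl fun m _ => ?_
  rw [Real.dist_eq, sq_abs, Real.norm_eq_abs, sq_abs, point_apply]
  ring

lemma sum_mul_doubledCoord_inl (p : {p : Fin 7 × Fin 7 // p.1 < p.2}) :
    ∑ m, y m * doubledCoord (.inl p) m = 2 * (y p.1.1.castSucc + y p.1.2.castSucc) := by
  simp [doubledCoord, mul_add, sum_add_distrib]
  ring

lemma sum_mul_doubledCoord_inr_inl :
    ∑ m, y m * doubledCoord (.inr (.inl ())) m = ∑ m, y m - 4 * y (Fin.last 7) := by
  simp [doubledCoord, Fin.sum_univ_castSucc]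
  ring

lemma sum_mul_doubledCoord_inr_inr (k : Fin 7) :
    ∑ m, y m * doubledCoord (.inr (.inr k)) m =
      ∑ m, y m - 2 * (y k.castSucc + y (Fin.last 7)) := by
  fin_cases k <;> simp [doubledCoord, Fin.sum_univ_succ] <;> ring

lemma sq_dist_point_inl (p : {p : Fin 7 × Fin 7 // p.1 < p.2}) :
    dist y (point (.inl p)) ^ 2 = ‖y‖ ^ 2 - 2 * (y p.1.1.castSucc + y p.1.2.castSucc) + 2 := by
  have h : ∀ p, ∑ m, doubledCoord (.inl p) m ^ 2 = 8 := by decide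
  rw [sq_dist_point, sum_mul_doubledCoord_inl, h]
  push_cast
  ring

variable {y}

lemma sq_dist_point_inr_inl (hy : y ∈ Hyp2 8) :
    dist y (point (.inr (.inl ()))) ^ 2 = ‖y‖ ^ 2 + 4 * y (Fin.last 7) + 2 := by
  have h : ∑ m, doubledCoord (.inr (.inl ())) m ^ 2 = 16 := by decide
  rw [sq_dist_point, sum_mul_doubledCoord_inr_inl, show ∑ m, y m = 2 from hy, h]
  push_cast
  ring

lemma sq_dist_point_inr_inr (hy : y ∈ Hyp2 8) (k : Fin 7) :
    dist y (point (.inr (.inr k))) ^ 2 = ‖y‖ ^ 2 + 2 * (y k.castSucc + y (Fin.last 7)) := by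
  have h : ∀ k, ∑ m, doubledCoord (.inr (.inr k)) m ^ 2 = 8 := by decide
  rw [sq_dist_point, sum_mul_doubledCoord_inr_inr, show ∑ m, y m = 2 from hy, h]
  push_cast
  ring

end

lemma false_of_two_distance_equations {a b t T : ℝ} (hsum : 6 * a + b + t = 2)
    (hT : T = 6 * a ^ 2 + b ^ 2 + t ^ 2)
    (haa : a + a = T / 2 ∨ a + a = T / 2 - 1) (hab : a + b = T / 2 ∨ a + b = T / 2 - 1)
    (hV : T + 4 * t + 2 = 2 ∨ T + 4 * t + 2 = 4)
    (hW : T + 2 * (b + t) = 2 ∨ T + 2 * (b + t) = 4) : False := by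
  rcases haa with h₁ | h₁ <;> rcases hab with h₂ | h₂ <;> rcases hV with h₃ | h₃ <;>
    rcases hW with h₄ | h₄ <;> nlinarith

theorem false_of_forall_sq_dist_point {y : EuclideanSpace ℝ (Fin 8)} (hy : y ∈ Hyp2 8)
    (h : ∀ a, dist y (point a) ^ 2 = 2 ∨ dist y (point a) ^ 2 = 4) : False := by
  have hJ : ∀ i j : Fin 7, i ≠ j → y i.castSucc + y j.castSucc = ‖y‖ ^ 2 / 2 ∨
      y i.castSucc + y j.castSucc = ‖y‖ ^ 2 / 2 - 1 := by
    intro i j hij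
    wlog hlt : i < j generalizing i j
    · rw [add_comm]
      exact this j i hij.symm (lt_of_le_of_ne (not_lt.1 hlt) hij.symm)
    have hp := h (.inl ⟨(i, j), hlt⟩)
    rw [sq_dist_point_inl] at hp
    exact hp.imp (fun _ => by linarith) fun _ => by linarith
  obtain ⟨k, a, hk⟩ := exists_forall_ne_eq_of_add_mem hJ
  have hne : ∀ k : Fin 7, k + 1 ≠ k ∧ k + 2 ≠ k ∧ k + 1 ≠ k + 2 := by decide
  obtain ⟨h₁, h₂, h₁₂⟩ := hne k
  have haa := hJ _ _ h₁₂
  have hab := hJ _ _ h₁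
  rw [hk _ h₁, hk _ h₂] at haa
  rw [hk _ h₁] at hab
  have hV := h (.inr (.inl ()))
  have hW := h (.inr (.inr k))
  rw [sq_dist_point_inr_inl hy] at hV
  rw [sq_dist_point_inr_inr hy] at hW
  refine false_of_two_distance_equations ?_ ?_ haa hab hV hW
  · have hsum : ∑ m, y m = 2 := hy
    rw [Fin.sum_univ_castSucc, sum_eq_add_mul_of_forall_ne_eq hk, Fintype.card_fin,
      Nat.cast_ofNat] at hsum
    linarith
  · simp only [EuclideanSpace.norm_sq_eq, Real.norm_eq_abs, sq_abs]
    rw [Fin.sum_univ_castSucc, sum_eq_add_mul_of_forall_ne_eq (a := a ^ 2)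
      (f := fun i : Fin 7 => y i.castSucc ^ 2) fun i hi => by rw [hk i hi], Fintype.card_fin]
    ring

theorem maximal_two_distance_R8 :
    (JohnsonRep' 8 ∪ V0eight ∪ Weight).ncard = 29 ∧
    (JohnsonRep' 8 ∪ V0eight ∪ Weight) ⊆ Hyp2 8 ∧
    IsSDistanceSet 2 (JohnsonRep' 8 ∪ V0eight ∪ Weight) ∧
    distSet (JohnsonRep' 8 ∪ V0eight ∪ Weight) = {Real.sqrt 2, 2} ∧
    (¬∃ y ∈ Hyp2 8 \ (JohnsonRep' 8 ∪ V0eight ∪ Weight),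
      IsSDistanceSet 2 (JohnsonRep' 8 ∪ V0eight ∪ Weight ∪ {y})) := by
  rw [← range_point]
  refine ⟨ncard_range_point, range_point_subset_hyp2, isSDistanceSet_range_point,
    distSet_range_point, ?_⟩
  rintro ⟨y, ⟨hyH, hyS⟩, hy⟩
  refine false_of_forall_sq_dist_point hyH fun a => ?_
  have hmem : dist y (point a) ∈ distSet (Set.range point ∪ {y}) :=
    ⟨y, .inr rfl, point a, .inl ⟨a, rfl⟩, fun h => hyS (h ▸ ⟨a, rfl⟩), rfl⟩
  rw [isSDistanceSet_range_point.distSet_eq_of_subset hy Set.subset_union_left,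
    distSet_range_point] at hmem
  exact (eq_sqrt_two_or_eq_two_iff dist_nonneg).1 hmem
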